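/- arXiv:2304.12812 — 3 statements merged into one kernel-verified Lean document; each statement's English description precedes it below -/
import Mathlib

section
/- Let R be a commutative ring and let x, y ∈ R be such that x is a non-zero-divisor in R and the image of y in R/(x) is a non-zero-divisor. Then the commutative square of quotient maps R/(xy) → R/(x), R/(xy) → R/(y), R/(x) → R/(x,y), R/(y) → R/(x,y) is a pullback square of commutative rings: the ring homomorphism R/(xy) → R/(x) × R/(y) induced by the two quotient maps is injective, and its range consists exactly of those pairs whose images in R/(x,y) agree. -/
/-!
The map `R/(xy) → R/(x) × R/(y)` has kernel `((x) ∩ (y))/(xy)`, and `(x) ∩ (y) = (xy)`: if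
`x ∣ y b` then `x ∣ b` since `y` is regular modulo `x`. Its range is the fibre product over
`R/(x, y)` for any two ideals: if `a - b = i + j` with `i ∈ I`, `j ∈ J`, then `a - i` lifts
both `a mod I` and `b mod J`.
-/

namespace Ideal

variable {R : Type*} [CommRing R]

theorem span_singleton_inf_span_singleton_eq_span_mul {x y : R}
    (hy : Quotient.mk (span {x}) y ∈ nonZeroDivisors (R ⧸ span {x})) :
    span {x} ⊓ span {y} = span {x * y} := by
  refine le_antisymm ?_ (le_inf (span_singleton_le_span_singleton.mpr (dvd_mul_right x y))
    (span_singleton_le_span_singleton.mpr (dvd_mul_left y x)))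
  rintro r ⟨hrx, hry⟩
  obtain ⟨b, rfl⟩ := mem_span_singleton'.mp hry
  have hb : Quotient.mk (span {x}) b = 0 := by
    refine hy.2 _ ?_
    rwa [← map_mul, Quotient.eq_zero_iff_mem]
  obtain ⟨c, rfl⟩ := mem_span_singleton.mp (Quotient.eq_zero_iff_mem.mp hb)
  exact mem_span_singleton.mpr ⟨c, by ring⟩

theorem exists_mk_eq_mk_of_factor_eq {I J T : Ideal R} (hIT : I ≤ T) (hJT : J ≤ T)
    (hT : T ≤ I ⊔ J) {a : R ⧸ I} {b : R ⧸ J}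
    (h : Quotient.factor hIT a = Quotient.factor hJT b) :
    ∃ r : R, Quotient.mk I r = a ∧ Quotient.mk J r = b := by
  obtain ⟨a, rfl⟩ := Quotient.mk_surjective a
  obtain ⟨b, rfl⟩ := Quotient.mk_surjective b
  rw [Quotient.factor_mk, Quotient.factor_mk, Quotient.eq] at h
  obtain ⟨i, hi, j, hj, hij⟩ := Submodule.mem_sup.mp (hT h)
  refine ⟨a - i, Quotient.eq.mpr (by simpa using neg_mem hi), Quotient.eq.mpr ?_⟩
  rwa [show a - i - b = j by linear_combination -hij]

end Ideal

open Ideal in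
/-- If `(x, y)` is a regular sequence on the commutative ring `R`, then the
square `R/(xy) → R/(x), R/(xy) → R/(y), R/(x) → R/(x,y) ← R/(y)` is a pullback
square: the induced map `R/(xy) → R/(x) × R/(y)` is injective, with range the
pairs having equal image in `R/(x,y)`. -/
theorem stmt3 {R : Type*} [CommRing R] (x y : R)
    (hy : Ideal.Quotient.mk (Ideal.span {x}) y ∈ nonZeroDivisors (R ⧸ Ideal.span {x}))
    (φ : R ⧸ Ideal.span {x * y} →+* (R ⧸ Ideal.span {x}) × (R ⧸ Ideal.span {y}))
    (hφ : ∀ r : R, φ (Ideal.Quotient.mk _ r) =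
      (Ideal.Quotient.mk _ r, Ideal.Quotient.mk _ r)) :
    Function.Injective φ ∧
      Set.range φ =
        { z : (R ⧸ Ideal.span {x}) × (R ⧸ Ideal.span {y}) |
          Ideal.Quotient.factor (S := Ideal.span {x}) (T := Ideal.span {x, y})
              (Ideal.span_mono (by simp)) z.1 =
            Ideal.Quotient.factor (S := Ideal.span {y}) (T := Ideal.span {x, y})
              (Ideal.span_mono (by simp)) z.2 } := by
  constructor
  · refine (injective_iff_map_eq_zero φ).mpr fun a ha => ?_
    obtain ⟨r, rfl⟩ := Ideal.Quotient.mk_surjective a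
    rw [hφ, Prod.mk_eq_zero, Quotient.eq_zero_iff_mem, Quotient.eq_zero_iff_mem] at ha
    rwa [Quotient.eq_zero_iff_mem, ← span_singleton_inf_span_singleton_eq_span_mul hy]
  · ext z
    constructor
    · rintro ⟨c, rfl⟩
      obtain ⟨r, rfl⟩ := Ideal.Quotient.mk_surjective c
      simp only [hφ, Set.mem_ofPred_eq, Quotient.factor_mk]
    · intro h
      obtain ⟨r, hrx, hry⟩ := exists_mk_eq_mk_of_factor_eq _ _ (span_insert x {y}).le h
      exact ⟨Ideal.Quotient.mk _ r, by rw [hφ, hrx, hry]⟩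
end

section
/- In the category of monoids, the pushout of the two projection homomorphisms ℕ × ℕ → ℕ (first projection and second projection) is the trivial monoid; that is, the pushout object is a subsingleton. -/
/-- The pushout, in the category of monoids, of the two projections
`ℕ × ℕ → ℕ` is the trivial monoid: any monoid `P` equipped with the universal
property of this pushout is a subsingleton. -/
theorem stmt7 {P : Type u} [AddMonoid P]
    (inl inr : ℕ →+ P)
    (hcomm : inl.comp (AddMonoidHom.fst ℕ ℕ) = inr.comp (AddMonoidHom.snd ℕ ℕ))
    (huniv : ∀ (Q : Type u) [AddMonoid Q] (f g : ℕ →+ Q),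
      f.comp (AddMonoidHom.fst ℕ ℕ) = g.comp (AddMonoidHom.snd ℕ ℕ) →
      ∃! h : P →+ Q, h.comp inl = f ∧ h.comp inr = g) :
    Subsingleton P := by
  have h0 : ∀ a : ℕ, inl a = 0 := fun a => by
    have := DFunLike.congr_fun hcomm (a, 0)
    simpa using this
  have h0' : ∀ a : ℕ, inr a = 0 := fun a => by
    have := DFunLike.congr_fun hcomm (0, a)
    simpa [h0 0] using this.symm
  obtain ⟨h, _, hu⟩ := huniv P inl inr hcomm
  have hid : AddMonoidHom.id P = h := hu _ ⟨by ext; simp, by ext; simp⟩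
  have hz : (0 : P →+ P) = h := hu _ ⟨by ext; simp [h0 1], by ext; simp [h0' 1]⟩
  constructor
  intro p q
  have hp := DFunLike.congr_fun (hid.trans hz.symm) p
  have hq := DFunLike.congr_fun (hid.trans hz.symm) q
  simpa using hp.trans hq.symm
end

section
/- In the category of groups, the pushout of the two projection homomorphisms ℤ × ℤ → ℤ (first projection and second projection) is the trivial group; that is, the pushout object is a subsingleton. -/
/-- The pushout, in the category of groups, of the two projections
`ℤ × ℤ → ℤ` is the trivial group: any group `P` equipped with the universal
property of this pushout is a subsingleton. -/
theorem stmt8 {P : Type u} [AddGroup P]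
    (inl inr : ℤ →+ P)
    (hcomm : inl.comp (AddMonoidHom.fst ℤ ℤ) = inr.comp (AddMonoidHom.snd ℤ ℤ))
    (huniv : ∀ (Q : Type u) [AddGroup Q] (f g : ℤ →+ Q),
      f.comp (AddMonoidHom.fst ℤ ℤ) = g.comp (AddMonoidHom.snd ℤ ℤ) →
      ∃! h : P →+ Q, h.comp inl = f ∧ h.comp inr = g) :
    Subsingleton P := by
  have hl : inl = 0 := AddMonoidHom.ext_int
    (by simpa using DFunLike.congr_fun hcomm (1, 0))
  have hr : inr = 0 := AddMonoidHom.ext_int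
    (by simpa using (DFunLike.congr_fun hcomm (0, 1)).symm)
  obtain ⟨h, _, hu⟩ := huniv P inl inr hcomm
  have hid : AddMonoidHom.id P = (0 : P →+ P) := by
    have h1 := hu (AddMonoidHom.id P) ⟨by ext x; simp, by ext x; simp⟩
    have h2 := hu 0 ⟨by rw [hl]; ext x; simp, by rw [hr]; ext x; simp⟩
    rw [h1, h2]
  constructor
  intro a b
  have ha := DFunLike.congr_fun hid a
  have hb := DFunLike.congr_fun hid b
  simp at ha hb
  rw [ha, hb]
end
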